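/- Let q̃(a, b) = (a² + b² + ab)/2 for integers a, b. Then the Gauss sum Σ_{(a,b) ∈ {0,1}²} exp(2πi · q̃(a, b)) equals −2, i.e. it equals 2 · exp(2πi · 4/8). Consequently the Brown–Kervaire invariant β(q) of the quadratic ℤ/2-linking form q(a, b) = (a² + b² + ab)/2 mod ℤ, defined by the equation Σ_{v ∈ (ℤ/2)²} exp(2πi · q(v)) = |(ℤ/2)²|^{1/2} · exp(2πi · β(q)/8), equals 4 ∈ ℤ/8. -/

import Mathlib

/-!
Every term is `exp(πi·n) = (-1)^n` with `n = a² + b² + ab`, which is even only at `(0, 0)`, so the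
Gauss sum is `1 - 3 = -2 = 2·exp(2πi·4/8)`. Since `|(ℤ/2)²|^{1/2} = 2` and `j ↦ exp(2πi·j/8)` is
injective on `ℤ/8`, the invariant is `4`.
-/

open scoped BigOperators

/-- The Gauss sum term `exp(2πi·(a² + b² + ab)/2)` attached to `v = (a, b) ∈ (ℤ/2)²`,
computed using the representatives `a, b ∈ {0, 1}`. -/
noncomputable def gaussTerm (v : ZMod 2 × ZMod 2) : ℂ :=
  Complex.exp (2 * Real.pi * Complex.I *
    (((v.1.val : ℂ) ^ 2 + (v.2.val : ℂ) ^ 2 + (v.1.val : ℂ) * (v.2.val : ℂ)) / 2))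

open Complex Real

lemma exp_two_pi_mul_I_mul_natCast_div_two (n : ℕ) :
    exp (2 * π * I * (n / 2)) = (-1) ^ n := by
  rw [show 2 * (π : ℂ) * I * (n / 2) = n * (π * I) by ring, Complex.exp_nat_mul, exp_pi_mul_I]

lemma exp_two_pi_mul_I_mul_val_div {N : ℕ} [NeZero N] (j : ZMod N) :
    exp (2 * π * I * (j.val / N)) = ZMod.stdAddChar j := by
  rw [ZMod.stdAddChar_apply, ZMod.toCircle_apply, mul_div_assoc]

lemma gaussTerm_eq_neg_one_pow (v : ZMod 2 × ZMod 2) :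
    gaussTerm v = (-1) ^ (v.1.val ^ 2 + v.2.val ^ 2 + v.1.val * v.2.val) := by
  rw [gaussTerm, ← exp_two_pi_mul_I_mul_natCast_div_two]
  push_cast
  rfl

lemma sum_gaussTerm : ∑ v, gaussTerm v = -2 := by
  simp_rw [gaussTerm_eq_neg_one_pow]
  have h_int :
      ∑ v : ZMod 2 × ZMod 2, (-1 : ℤ) ^ (v.1.val ^ 2 + v.2.val ^ 2 + v.1.val * v.2.val) = -2 := by
    decide
  exact_mod_cast h_int

lemma sqrt_card_zmod_two_prod : √(Fintype.card (ZMod 2 × ZMod 2) : ℝ) = 2 := by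
  norm_num [Real.sqrt_eq_iff_mul_self_eq]

/-- The Gauss sum `Σ_{(a,b) ∈ {0,1}²} exp(2πi·(a² + b² + ab)/2)` equals `−2`, which equals
`2·exp(2πi·4/8)`; consequently the Brown–Kervaire invariant `β(q) ∈ ℤ/8` of the quadratic
linking form `q(a,b) = (a² + b² + ab)/2 mod ℤ` on `(ℤ/2)²`, defined by the equation
`Σ_v exp(2πi·q(v)) = |(ℤ/2)²|^{1/2}·exp(2πi·β(q)/8)`, equals `4`. -/
theorem brownKervaire_arf_form :
    (∑ v : ZMod 2 × ZMod 2, gaussTerm v) = -2 ∧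
    (-2 : ℂ) = 2 * Complex.exp (2 * Real.pi * Complex.I * (4 / 8)) ∧
    ∀ β : ZMod 8,
      ((∑ v : ZMod 2 × ZMod 2, gaussTerm v) =
        (Real.sqrt (Fintype.card (ZMod 2 × ZMod 2)) : ℂ) *
          Complex.exp (2 * Real.pi * Complex.I * ((β.val : ℂ) / 8))) ↔ β = 4 := by
  have h_root : (-2 : ℂ) = 2 * exp (2 * π * I * (4 / 8)) := by
    rw [show (4 / 8 : ℂ) = (1 : ℕ) / 2 by norm_num, exp_two_pi_mul_I_mul_natCast_div_two]
    ring
  have h_char (j : ZMod 8) : exp (2 * π * I * (j.val / 8)) = ZMod.stdAddChar j := by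
    exact_mod_cast exp_two_pi_mul_I_mul_val_div j
  refine ⟨sum_gaussTerm, h_root, fun β => ?_⟩
  rw [sum_gaussTerm, sqrt_card_zmod_two_prod, ofReal_ofNat, h_root,
    show (4 : ℂ) = (4 : ZMod 8).val from rfl, h_char, h_char, mul_right_inj' two_ne_zero,
    ZMod.injective_stdAddChar.eq_iff, eq_comm]
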